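/- Substituting κ = (ε + 2ζ₁ζ₂)/(1 + ε − 2ζ₁²) into the stationarity condition ∂J/∂ζ₂ = 0 for the TMD cost J yields the polynomial equation (ε+1)ε³ + 8ζ₁ζ₂ε²(ε+1−ζ₁²) + 4ζ₂²(ε+1−ζ₁²)(4ζ₁²(ε+1−ζ₁²) − ε − 1) = 0 in ζ₂. -/

import Mathlib

/-!
For fixed `κ`, both the numerator and the denominator of `J` are cubics in `ζ₂`, so at a
critical point with nonzero denominator the quotient-rule numerator `N' D - N D'` vanishes.
After substituting `κ = (ε + 2ζ₁ζ₂)/(1 + ε - 2ζ₁²)` and clearing the denominator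
`(1 + ε - 2ζ₁²)⁴`, that numerator factors as `ε² ζ₁ (ζ₂(1 + ε) + εζ₁)²` times the stated
polynomial, and the prefactor is positive.
-/

theorem hasDerivAt_cubic {𝕜 : Type*} [NontriviallyNormedField 𝕜] (a b c d x : 𝕜) :
    HasDerivAt (fun z => a * z ^ 3 + b * z ^ 2 + c * z + d) (3 * a * x ^ 2 + 2 * b * x + c) x := by
  refine (((((hasDerivAt_pow 3 x).const_mul a).fun_add ((hasDerivAt_pow 2 x).const_mul b)).fun_add
    ((hasDerivAt_id' x).const_mul c)).add_const d).congr_deriv ?_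
  push_cast
  ring

theorem mul_sub_mul_eq_zero_of_deriv_div_eq_zero {𝕜 : Type*}
    [NontriviallyNormedField 𝕜] {f g : 𝕜 → 𝕜} {f' g' x : 𝕜}
    (hf : HasDerivAt f f' x) (hg : HasDerivAt g g' x) (hx : g x ≠ 0)
    (h : deriv (fun z => f z / g z) x = 0) : f' * g x - f x * g' = 0 := by
  rw [(hf.fun_div hg hx).deriv, div_eq_zero_iff] at h
  exact h.resolve_right (pow_ne_zero 2 hx)

section
variable (ε ζ₁ : ℝ)

def tmdNum (z κ : ℝ) : ℝ :=
  z * ε * (4 * ζ₁ ^ 2 * z * κ + z * (4 * ζ₁ * z + ε) + ζ₁ * κ ^ 2 * (1 + ε))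

def tmdDen (z κ : ℝ) : ℝ :=
  ζ₁ * z * (4 * ζ₁ * z * κ + 4 * z ^ 2 + κ ^ 2) + ε ^ 2 * (ζ₁ + z) * (ζ₁ * κ ^ 2 + z)
    + 2 * ζ₁ * z * ε * (κ * (2 * ζ₁ * (ζ₁ + z) - 1) + 2 * z * (ζ₁ + z) + κ ^ 2)

def tmdNumDeriv (z κ : ℝ) : ℝ :=
  12 * ε * ζ₁ * z ^ 2 + 2 * (4 * ε * ζ₁ ^ 2 * κ + ε ^ 2) * z + ε * ζ₁ * κ ^ 2 * (1 + ε)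

def tmdDenDeriv (z κ : ℝ) : ℝ :=
  12 * ζ₁ * (1 + ε) * z ^ 2 + 2 * (4 * ζ₁ ^ 2 * κ * (1 + ε) + 4 * ε * ζ₁ ^ 2 + ε ^ 2) * z
    + ζ₁ * κ ^ 2 - 2 * ε * ζ₁ * κ + 2 * ε * ζ₁ * κ ^ 2 + 4 * ε * ζ₁ ^ 3 * κ + ε ^ 2 * ζ₁
    + ε ^ 2 * ζ₁ * κ ^ 2

theorem hasDerivAt_tmdNum (z κ : ℝ) :
    HasDerivAt (fun z => tmdNum ε ζ₁ z κ) (tmdNumDeriv ε ζ₁ z κ) z := by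
  have hcubic : (fun z => tmdNum ε ζ₁ z κ) = fun z => 4 * ε * ζ₁ * z ^ 3
      + (4 * ε * ζ₁ ^ 2 * κ + ε ^ 2) * z ^ 2 + ε * ζ₁ * κ ^ 2 * (1 + ε) * z + 0 := by
    funext z
    unfold tmdNum
    ring
  rw [hcubic]
  exact (hasDerivAt_cubic _ _ _ _ z).congr_deriv (by unfold tmdNumDeriv; ring)

theorem hasDerivAt_tmdDen (z κ : ℝ) :
    HasDerivAt (fun z => tmdDen ε ζ₁ z κ) (tmdDenDeriv ε ζ₁ z κ) z := by
  have hcubic : (fun z => tmdDen ε ζ₁ z κ) = fun z => 4 * ζ₁ * (1 + ε) * z ^ 3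
      + (4 * ζ₁ ^ 2 * κ * (1 + ε) + 4 * ε * ζ₁ ^ 2 + ε ^ 2) * z ^ 2
      + (ζ₁ * κ ^ 2 - 2 * ε * ζ₁ * κ + 2 * ε * ζ₁ * κ ^ 2 + 4 * ε * ζ₁ ^ 3 * κ + ε ^ 2 * ζ₁
        + ε ^ 2 * ζ₁ * κ ^ 2) * z + ε ^ 2 * ζ₁ ^ 2 * κ ^ 2 := by
    funext z
    unfold tmdDen
    ring
  rw [hcubic]
  exact (hasDerivAt_cubic _ _ _ _ z).congr_deriv (by unfold tmdDenDeriv; ring)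

theorem tmdNumDeriv_mul_tmdDen_sub_eq (z κ : ℝ) (hQ : 1 + ε - 2 * ζ₁ ^ 2 ≠ 0)
    (hκ : κ = (ε + 2 * ζ₁ * z) / (1 + ε - 2 * ζ₁ ^ 2)) :
    (1 + ε - 2 * ζ₁ ^ 2) ^ 4 * (tmdNumDeriv ε ζ₁ z κ * tmdDen ε ζ₁ z κ
      - tmdNum ε ζ₁ z κ * tmdDenDeriv ε ζ₁ z κ)
    = ε ^ 2 * ζ₁ * (z * (1 + ε) + ε * ζ₁) ^ 2 * ((ε + 1) * ε ^ 3
      + 8 * ζ₁ * z * ε ^ 2 * (ε + 1 - ζ₁ ^ 2)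
      + 4 * z ^ 2 * (ε + 1 - ζ₁ ^ 2) * (4 * ζ₁ ^ 2 * (ε + 1 - ζ₁ ^ 2) - ε - 1)) := by
  subst hκ
  unfold tmdNum tmdDen tmdNumDeriv tmdDenDeriv
  field_simp
  ring

end

theorem stmt_5_general (ε ζ₁ ζ₂ : ℝ) (hε : 0 < ε) (hζ₁ : 0 < ζ₁) (hζ₂ : 0 < ζ₂)
    (num den : ℝ → ℝ → ℝ)
    (hnum : num = fun z κ => z * ε * (4 * ζ₁ ^ 2 * z * κ + z * (4 * ζ₁ * z + ε)
      + ζ₁ * κ ^ 2 * (1 + ε)))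
    (hden : den = fun z κ => ζ₁ * z * (4 * ζ₁ * z * κ + 4 * z ^ 2 + κ ^ 2)
      + ε ^ 2 * (ζ₁ + z) * (ζ₁ * κ ^ 2 + z)
      + 2 * ζ₁ * z * ε * (κ * (2 * ζ₁ * (ζ₁ + z) - 1) + 2 * z * (ζ₁ + z) + κ ^ 2))
    (J : ℝ → ℝ → ℝ) (hJ : J = fun z κ => num z κ / den z κ)
    (κstar : ℝ) (hκstar : κstar = (ε + 2 * ζ₁ * ζ₂) / (1 + ε - 2 * ζ₁ ^ 2))
    (h1 : 1 + ε - 2 * ζ₁ ^ 2 ≠ 0) (h3 : den ζ₂ κstar ≠ 0)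
    (hstat : deriv (fun z => J z κstar) ζ₂ = 0) :
    (ε + 1) * ε ^ 3 + 8 * ζ₁ * ζ₂ * ε ^ 2 * (ε + 1 - ζ₁ ^ 2)
      + 4 * ζ₂ ^ 2 * (ε + 1 - ζ₁ ^ 2) * (4 * ζ₁ ^ 2 * (ε + 1 - ζ₁ ^ 2) - ε - 1) = 0 := by
  subst hnum hden hJ
  have hcrit := mul_sub_mul_eq_zero_of_deriv_div_eq_zero (hasDerivAt_tmdNum ε ζ₁ ζ₂ κstar)
    (hasDerivAt_tmdDen ε ζ₁ ζ₂ κstar) h3 hstat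
  have hfactor := tmdNumDeriv_mul_tmdDen_sub_eq ε ζ₁ ζ₂ κstar h1 hκstar
  rw [hcrit, mul_zero, eq_comm] at hfactor
  have hprefactor : ε ^ 2 * ζ₁ * (ζ₂ * (1 + ε) + ε * ζ₁) ^ 2 ≠ 0 := by positivity
  exact (mul_eq_zero.mp hfactor).resolve_left hprefactor

/-- Substituting `κ = (ε + 2ζ₁ζ₂)/(1 + ε − 2ζ₁²)` into the stationarity condition
`∂J/∂ζ₂ = 0` for the TMD cost `J` yields the polynomial equation
`(ε+1)ε³ + 8ζ₁ζ₂ε²(ε+1−ζ₁²) + 4ζ₂²(ε+1−ζ₁²)(4ζ₁²(ε+1−ζ₁²) − ε − 1) = 0` in `ζ₂`. -/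
theorem stmt_5 (ε ζ₁ ζ₂ : ℝ) (hε : 0 < ε) (hζ₁ : 0 < ζ₁) (hζ₁1 : ζ₁ < 1) (hζ₂ : 0 < ζ₂)
    (num den : ℝ → ℝ → ℝ)
    (hnum : num = fun z κ => z * ε * (4 * ζ₁ ^ 2 * z * κ + z * (4 * ζ₁ * z + ε)
      + ζ₁ * κ ^ 2 * (1 + ε)))
    (hden : den = fun z κ => ζ₁ * z * (4 * ζ₁ * z * κ + 4 * z ^ 2 + κ ^ 2)
      + ε ^ 2 * (ζ₁ + z) * (ζ₁ * κ ^ 2 + z)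
      + 2 * ζ₁ * z * ε * (κ * (2 * ζ₁ * (ζ₁ + z) - 1) + 2 * z * (ζ₁ + z) + κ ^ 2))
    (J : ℝ → ℝ → ℝ) (hJ : J = fun z κ => num z κ / den z κ)
    (κstar : ℝ) (hκstar : κstar = (ε + 2 * ζ₁ * ζ₂) / (1 + ε - 2 * ζ₁ ^ 2))
    (h1 : 1 + ε - 2 * ζ₁ ^ 2 ≠ 0) (h2 : ε + 1 - ζ₁ ^ 2 ≠ 0) (h3 : den ζ₂ κstar ≠ 0)
    (hstat : deriv (fun z => J z κstar) ζ₂ = 0) :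
    (ε + 1) * ε ^ 3 + 8 * ζ₁ * ζ₂ * ε ^ 2 * (ε + 1 - ζ₁ ^ 2)
      + 4 * ζ₂ ^ 2 * (ε + 1 - ζ₁ ^ 2) * (4 * ζ₁ ^ 2 * (ε + 1 - ζ₁ ^ 2) - ε - 1) = 0 :=
  stmt_5_general ε ζ₁ ζ₂ hε hζ₁ hζ₂ num den hnum hden J hJ κstar hκstar h1 h3 hstat
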